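/- arXiv:2004.10719 — 3 statements merged into one kernel-verified Lean document; each statement's English description precedes it below -/
import Mathlib

section
/- Let q be a prime power, m a positive integer, and suppose q^m > 4^{70}. If w(M) denotes the number of distinct prime divisors of M and we assume ω(q^m−1) ≥ 473, then q^{m/2 − 2} > 4·(2^{ω(q^m−1)})². -/
/-!
Every prime factor `p` of `M` contributes at least `2 ^ ⌊log₂ p⌋` to `∏ p ≤ M`, and `⌊log₂ p⌋`
falls short of `11` only for the primes below `2 ^ 11`, by `704` in total. Hence
`2 ^ (11 ω(M)) ≤ 2 ^ 704 M`, which for `ω(M) ≥ 428` gives `(4 · 2 ^ (2 ω(M))) ^ 14 ≤ M ^ 3`.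
With `M = q ^ m - 1 < q ^ m` and `3 m ≤ 14 (m / 2 - 2)` for `m ≥ 7`, taking 14th roots proves
the claim.
-/

open Finset

namespace Nat

/-- Here `704 = ∑_{j=1}^{11} π(2 ^ j - 1)`. -/
theorem sum_primesBelow_2048_eleven_sub_log :
    ∑ p ∈ primesBelow 2048, (11 - log 2 p) = 704 := by
  have hfilter : primesBelow 2048 =
      (range 2048).filter (fun k => 2 ≤ k ∧ ∀ d < k.sqrt + 1, 2 ≤ d → ¬ d ∣ k) := by
    ext k
    simp [primesBelow, prime_def_le_sqrt, Nat.lt_succ_iff, imp.swap (a := 2 ≤ _)]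
  rw [hfilter]
  decide +kernel

theorem eleven_mul_card_le_sum_log_add {S : Finset ℕ} (hS : ∀ p ∈ S, p.Prime) :
    11 * #S ≤ ∑ p ∈ S, log 2 p + 704 := by
  have hdeficit : ∑ p ∈ S, (11 - log 2 p) ≤ 704 := by
    rw [← sum_primesBelow_2048_eleven_sub_log]
    refine sum_le_sum_of_ne_zero fun p hp hne => mem_primesBelow.mpr ⟨?_, hS p hp⟩
    exact lt_pow_of_log_lt (x := 11) one_lt_two (by omega)
  calc 11 * #S = ∑ _p ∈ S, 11 := by rw [sum_const, smul_eq_mul, mul_comm]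
    _ ≤ ∑ p ∈ S, (log 2 p + (11 - log 2 p)) := sum_le_sum fun _ _ => by omega
    _ = ∑ p ∈ S, log 2 p + ∑ p ∈ S, (11 - log 2 p) := sum_add_distrib
    _ ≤ ∑ p ∈ S, log 2 p + 704 := by omega

theorem two_pow_eleven_mul_card_primeFactors_le {M : ℕ} (hM : M ≠ 0) :
    2 ^ (11 * #M.primeFactors) ≤ 2 ^ 704 * M :=
  calc 2 ^ (11 * #M.primeFactors)
      ≤ 2 ^ (704 + ∑ p ∈ M.primeFactors, log 2 p) := by
        gcongr
        · exact one_le_two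
        · linarith [eleven_mul_card_le_sum_log_add (S := M.primeFactors)
            fun _ => prime_of_mem_primeFactors]
    _ = 2 ^ 704 * ∏ p ∈ M.primeFactors, 2 ^ log 2 p := by rw [pow_add, prod_pow_eq_pow_sum]
    _ ≤ 2 ^ 704 * ∏ p ∈ M.primeFactors, p := by
        gcongr with p hp
        exact pow_log_le_self 2 (prime_of_mem_primeFactors hp).ne_zero
    _ ≤ 2 ^ 704 * M := by
        gcongr
        exact le_of_dvd (pos_of_ne_zero hM) (prod_primeFactors_dvd M)

theorem four_mul_sq_two_pow_card_primeFactors_pow_le {M : ℕ} (hM : M ≠ 0)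
    (hω : 428 ≤ #M.primeFactors) :
    (4 * (2 ^ #M.primeFactors) ^ 2) ^ 14 ≤ M ^ 3 := by
  set n := #M.primeFactors
  have key : (2 ^ 704) ^ 3 * (4 * (2 ^ n) ^ 2) ^ 14 ≤ (2 ^ 704) ^ 3 * M ^ 3 :=
    calc (2 ^ 704) ^ 3 * (4 * (2 ^ n) ^ 2) ^ 14 = 2 ^ (704 * 3 + (2 + n * 2) * 14) := by
          rw [show (4 : ℕ) = 2 ^ 2 from rfl]
          simp only [← pow_mul, ← pow_add]
      _ ≤ 2 ^ (11 * n * 3) := pow_le_pow_right₀ one_le_two (by omega)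
      _ = (2 ^ (11 * n)) ^ 3 := pow_mul _ _ _
      _ ≤ (2 ^ 704 * M) ^ 3 := by gcongr; exact two_pow_eleven_mul_card_primeFactors_le hM
      _ = (2 ^ 704) ^ 3 * M ^ 3 := mul_pow _ _ _
  exact Nat.le_of_mul_le_mul_left key (by positivity)

end Nat

theorem stmt_5_general (q m : ℕ)
    (hm : 7 ≤ m)
    (hω : 473 ≤ (q ^ m - 1).primeFactors.card) :
    (q : ℝ) ^ ((m : ℝ) / 2 - 2) >
      4 * ((2 : ℝ) ^ ((q ^ m - 1).primeFactors.card : ℕ)) ^ 2 := by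
  set n := (q ^ m - 1).primeFactors.card
  have hM : q ^ m - 1 ≠ 0 := by
    rintro h
    simp [n, h] at hω
  have hq : 1 ≤ q := Nat.pos_of_ne_zero <| by
    rintro rfl
    simp [zero_pow (by omega : m ≠ 0)] at hM
  have hcube : (4 * ((2 : ℝ) ^ n) ^ 2) ^ 14 ≤ ((q ^ m - 1 : ℕ) : ℝ) ^ 3 := by
    exact_mod_cast Nat.four_mul_sq_two_pow_card_primeFactors_pow_le hM (by omega)
  have hM_lt : ((q ^ m - 1 : ℕ) : ℝ) < (q : ℝ) ^ m := by
    exact_mod_cast Nat.sub_one_lt (pow_pos hq m).ne'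
  have hexponent : ((q : ℝ) ^ m) ^ 3 ≤ ((q : ℝ) ^ ((m : ℝ) / 2 - 2)) ^ 14 := by
    have hm' : (7 : ℝ) ≤ m := by exact_mod_cast hm
    rw [← Real.rpow_mul_natCast (by positivity), ← pow_mul, ← Real.rpow_natCast]
    exact Real.rpow_le_rpow_of_exponent_le (by exact_mod_cast hq) (by push_cast; linarith)
  refine lt_of_pow_lt_pow_left₀ 14 (by positivity) ?_
  calc (4 * ((2 : ℝ) ^ n) ^ 2) ^ 14 ≤ ((q ^ m - 1 : ℕ) : ℝ) ^ 3 := hcube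
    _ < ((q : ℝ) ^ m) ^ 3 := by gcongr
    _ ≤ ((q : ℝ) ^ ((m : ℝ) / 2 - 2)) ^ 14 := hexponent

/-- If q is a prime power, m ≥ 7, q^m > 4^70 and ω(q^m − 1) ≥ 473, then
q^{m/2 − 2} > 4·(2^{ω(q^m−1)})². -/
theorem stmt_5 (q m : ℕ) (hq : ∃ (p k : ℕ), p.Prime ∧ 0 < k ∧ q = p ^ k)
    (hm : 7 ≤ m) (hbig : (q : ℝ) ^ m > 4 ^ 70)
    (hω : 473 ≤ (q ^ m - 1).primeFactors.card) :
    (q : ℝ) ^ ((m : ℝ) / 2 - 2) >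
      4 * ((2 : ℝ) ^ ((q ^ m - 1).primeFactors.card : ℕ)) ^ 2 :=
  stmt_5_general q m hm hω
end

section
/- Let K be a field, N ≥ 2 an integer, b ∈ K*, q(x) = b·x, and let m₁, m₂ be integers with 0 ≤ m₁, m₂ < N − 1. Suppose p(x) ∈ K[x] is irreducible and coprime to x, and g₁, g₂ ∈ K[x] are coprime with x^{m₁}·p(x)^{m₂}·g₂(x)^{N−1} = b^{m₂}·g₁(x)^{N−1}·x^{m₂}. Then m₁ ≤ m₂. -/
open Polynomial

/-- Case 1 of the analysis of equation (7): with q(x) = b·x (b ≠ 0), p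
irreducible and coprime to x, g₁, g₂ coprime, and
x^{m₁}·p^{m₂}·g₂^{N−1} = b^{m₂}·g₁^{N−1}·x^{m₂}, the case m₁ > m₂ is
impossible, i.e. m₁ ≤ m₂. -/
theorem stmt_10 (K : Type*) [Field K] (N : ℕ) (hN : 2 ≤ N)
    (b : K) (hb : b ≠ 0) (m₁ m₂ : ℕ) (hm₁ : m₁ < N - 1) (hm₂ : m₂ < N - 1)
    (p : K[X]) (hp : Irreducible p) (hpx : IsCoprime p (X : K[X]))
    (g₁ g₂ : K[X]) (hg : IsCoprime g₁ g₂)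
    (heq : X ^ m₁ * p ^ m₂ * g₂ ^ (N - 1) = C b ^ m₂ * g₁ ^ (N - 1) * X ^ m₂) :
    m₁ ≤ m₂ := by
  by_contra hlt
  push_neg at hlt
  have hp0 : p ≠ 0 := hp.ne_zero
  have hN1 : 1 ≤ N - 1 := by omega
  -- g₁ ≠ 0 and g₂ ≠ 0
  have hg₁0 : g₁ ≠ 0 := by
    rintro rfl
    have : X ^ m₁ * p ^ m₂ * g₂ ^ (N - 1) = 0 := by
      rw [heq, zero_pow (by omega), mul_zero, zero_mul]
    have hg₂0 : g₂ = 0 := by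
      rcases mul_eq_zero.mp this with h | h
      · exact absurd h (mul_ne_zero (pow_ne_zero _ X_ne_zero) (pow_ne_zero _ hp0))
      · exact (pow_eq_zero_iff (by omega : N - 1 ≠ 0)).mp h
    subst hg₂0
    exact not_isCoprime_zero_zero hg
  have hg₂0 : g₂ ≠ 0 := by
    rintro rfl
    have : C b ^ m₂ * g₁ ^ (N - 1) * X ^ m₂ = 0 := by
      rw [← heq, zero_pow (by omega), mul_zero]
    have : g₁ = 0 := by
      rcases mul_eq_zero.mp this with h | h
      · rcases mul_eq_zero.mp h with h | h
        · exact absurd h (pow_ne_zero _ (by simpa using hb))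
        · exact (pow_eq_zero_iff (by omega : N - 1 ≠ 0)).mp h
      · exact absurd h (pow_ne_zero _ X_ne_zero)
    subst this
    exact not_isCoprime_zero_zero hg
  have hLne : X ^ m₁ * p ^ m₂ * g₂ ^ (N - 1) ≠ 0 :=
    mul_ne_zero (mul_ne_zero (pow_ne_zero _ X_ne_zero) (pow_ne_zero _ hp0))
      (pow_ne_zero _ hg₂0)
  have hRne : C b ^ m₂ * g₁ ^ (N - 1) * X ^ m₂ ≠ 0 :=
    mul_ne_zero (mul_ne_zero (pow_ne_zero _ (by simpa using hb)) (pow_ne_zero _ hg₁0))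
      (pow_ne_zero _ X_ne_zero)
  -- root multiplicities at 0
  have hrX : rootMultiplicity (0 : K) X = 1 := by
    simpa using rootMultiplicity_X_sub_C_self (x := (0 : K))
  have hrp : rootMultiplicity (0 : K) p = 0 := by
    refine rootMultiplicity_eq_zero ?_
    intro h
    have hdvd : (X : K[X]) ∣ p := by
      have := dvd_iff_isRoot.mpr h
      simpa using this
    exact Polynomial.not_isUnit_X (hpx.isUnit_of_dvd' hdvd dvd_rfl)
  have hrpow : ∀ (q : K[X]), q ≠ 0 → ∀ n : ℕ,
      rootMultiplicity (0 : K) (q ^ n) = n * rootMultiplicity (0 : K) q := by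
    intro q hq n
    induction n with
    | zero => simp [rootMultiplicity_eq_zero, IsRoot]
    | succ n ih =>
      rw [pow_succ, rootMultiplicity_mul (mul_ne_zero (pow_ne_zero _ hq) hq), ih]
      ring
  have hrC : rootMultiplicity (0 : K) (C b) = 0 := by
    refine rootMultiplicity_eq_zero ?_
    simp [IsRoot, hb]
  have key := congrArg (rootMultiplicity (0 : K)) heq
  rw [rootMultiplicity_mul hLne, rootMultiplicity_mul hRne,
    rootMultiplicity_mul (mul_ne_zero (pow_ne_zero _ X_ne_zero) (pow_ne_zero _ hp0)),
    rootMultiplicity_mul (mul_ne_zero (pow_ne_zero _ (by simpa using hb)) (pow_ne_zero _ hg₁0)),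
    hrpow _ X_ne_zero, hrpow _ hp0, hrpow _ hg₁0, hrpow _ hg₂0,
    hrpow _ (by simpa using hb : (C b : K[X]) ≠ 0), hrX, hrp, hrC] at key
  -- key : m₁ * 1 + m₂ * 0 + (N-1) * r g₂ = m₂ * 0 + (N-1) * r g₁ + m₂ * 1
  set r₁ := rootMultiplicity (0 : K) g₁ with hr₁
  set r₂ := rootMultiplicity (0 : K) g₂ with hr₂
  -- since m₂ < m₁, we get r₂ < r₁ hence r₁ ≥ 1, so X ∣ g₁
  simp only [hrpow _ X_ne_zero, hrX, mul_one] at key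
  have hmul : (N - 1) * r₂ < (N - 1) * r₁ := by omega
  have hr₁pos : 1 ≤ r₁ := by
    rcases Nat.eq_zero_or_pos r₁ with h | h
    · simp [h] at hmul
    · exact h
  have hXg₁ : (X : K[X]) ∣ g₁ := by
    have : g₁.IsRoot 0 := (rootMultiplicity_pos hg₁0).mp (by omega)
    simpa using dvd_iff_isRoot.mpr this
  have hr₂0 : r₂ = 0 := by
    rw [hr₂]
    refine rootMultiplicity_eq_zero ?_
    intro h
    have hXg₂ : (X : K[X]) ∣ g₂ := by simpa using dvd_iff_isRoot.mpr h
    exact Polynomial.not_isUnit_X (hg.isUnit_of_dvd' hXg₁ hXg₂)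
  have hle : (N - 1) ≤ (N - 1) * r₁ := Nat.le_mul_of_pos_right _ hr₁pos
  rw [hr₂0, mul_zero] at key
  omega
end

section
/- Let q be a prime power and m a positive integer. If g(x) ∈ F_{q^m}(x) is a rational function of the form u·x + v·x^{−1} with u, v ∈ F_q and g(x) = h(x)^{q^m} − h(x) for some rational function h(x) ∈ F_{q^m}(x), then u = v = 0. -/
/-!
Write `h = a / b` in lowest terms with `Q = n + 1` and clear denominators:
`(u X² + v) b^Q = X (a^Q - a b^n)`. If `X ∣ b`, cancelling one `X` and evaluating at `0` forces
`X ∣ a`, contradicting coprimality; so `b(0) ≠ 0`, and evaluating at `0` gives `v = 0`.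
Then `u X b^Q = a^Q - a b^n`, where the left side has degree `Q deg b + 1` if `u ≠ 0`, while the
right side has degree at most `Q deg b` (if `deg a ≤ deg b`) or exactly `Q deg a` (otherwise),
and neither can equal `Q deg b + 1` when `Q ≥ 2`.
-/

open Polynomial

section

variable {F : Type*} [Field F]

theorem eq_zero_of_C_mul_X_mul_pow_eq {u : F} {a b : F[X]} {n : ℕ} (hn : n ≠ 0) (hb : b ≠ 0)
    (H : C u * X * b ^ (n + 1) = a ^ (n + 1) - a * b ^ n) : u = 0 := by
  by_contra hu
  have hn1 : 1 ≤ n := Nat.one_le_iff_ne_zero.mpr hn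
  have hdeg : (a ^ (n + 1) - a * b ^ n).natDegree = (n + 1) * b.natDegree + 1 := by
    rw [← H, mul_assoc, natDegree_C_mul hu, natDegree_mul X_ne_zero (pow_ne_zero _ hb),
      natDegree_X, natDegree_pow]
    ring
  rcases le_or_gt a.natDegree b.natDegree with hle | hlt
  · have : (a ^ (n + 1) - a * b ^ n).natDegree ≤ (n + 1) * b.natDegree := by
      refine (natDegree_sub_le _ _).trans (max_le ?_ ?_)
      · rw [natDegree_pow]; exact Nat.mul_le_mul_left _ hle
      · refine natDegree_mul_le.trans ?_
        rw [natDegree_pow]; linarith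
    omega
  · have hlt' : (a * b ^ n).natDegree < (a ^ (n + 1)).natDegree := by
      refine natDegree_mul_le.trans_lt ?_
      rw [natDegree_pow, natDegree_pow]
      nlinarith
    rw [natDegree_sub_eq_left_of_natDegree_lt hlt', natDegree_pow] at hdeg
    nlinarith

theorem eval_zero_ne_zero_of_mul_pow_eq_X_mul {u v : F} {a b : F[X]} {n : ℕ} (hn : n ≠ 0)
    (hab : IsCoprime a b)
    (H : (C u * X ^ 2 + C v) * b ^ (n + 1) = X * (a ^ (n + 1) - a * b ^ n)) :
    b.eval 0 ≠ 0 := by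
  intro hb0
  obtain ⟨c, rfl⟩ : X ∣ b := by rwa [X_dvd_iff, coeff_zero_eq_eval_zero]
  have H' : X ^ n * ((C u * X ^ 2 + C v) * c ^ (n + 1)) = a ^ (n + 1) - a * (X * c) ^ n :=
    mul_left_cancel₀ X_ne_zero (by linear_combination H)
  have ha0 : a.eval 0 = 0 := by
    simpa [hn, eq_comm (a := (0 : F))] using congrArg (eval 0) H'
  have hXa : X ∣ a := by rwa [X_dvd_iff, coeff_zero_eq_eval_zero]
  exact not_isUnit_X (hab.isUnit_of_dvd' hXa (dvd_mul_right X c))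

theorem eq_zero_of_mul_pow_eq_X_mul {u v : F} {a b : F[X]} {n : ℕ} (hn : n ≠ 0)
    (hab : IsCoprime a b) (hb : b ≠ 0)
    (H : (C u * X ^ 2 + C v) * b ^ (n + 1) = X * (a ^ (n + 1) - a * b ^ n)) :
    u = 0 ∧ v = 0 := by
  have hv : v = 0 := by
    simpa [eval_zero_ne_zero_of_mul_pow_eq_X_mul hn hab H] using congrArg (eval 0) H
  subst hv
  rw [map_zero, add_zero] at H
  refine ⟨eq_zero_of_C_mul_X_mul_pow_eq (a := a) hn hb (mul_left_cancel₀ X_ne_zero ?_), rfl⟩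
  linear_combination H

theorem RatFunc.mul_denom_pow_eq_X_mul_of_eq_pow_sub_self {u v : F} {h : RatFunc F} {n : ℕ}
    (H : RatFunc.C u * RatFunc.X + RatFunc.C v * RatFunc.X⁻¹ = h ^ (n + 1) - h) :
    (Polynomial.C u * Polynomial.X ^ 2 + Polynomial.C v) * h.denom ^ (n + 1) =
      Polynomial.X * (h.num ^ (n + 1) - h.num * h.denom ^ n) := by
  apply RatFunc.algebraMap_injective F
  have hb : algebraMap F[X] (RatFunc F) h.denom ≠ 0 := RatFunc.algebraMap_ne_zero h.denom_ne_zero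
  have hX : (RatFunc.X : RatFunc F) ≠ 0 := RatFunc.X_ne_zero
  rw [← RatFunc.num_div_denom h, div_pow] at H
  simp only [map_mul, map_add, map_pow, map_sub, RatFunc.algebraMap_X, RatFunc.algebraMap_C]
  field_simp at H
  apply mul_right_cancel₀ hb
  linear_combination H

theorem RatFunc.eq_zero_of_C_mul_X_add_C_mul_X_inv_eq_pow_sub_self {u v : F} {h : RatFunc F}
    {Q : ℕ} (hQ : 2 ≤ Q)
    (H : RatFunc.C u * RatFunc.X + RatFunc.C v * RatFunc.X⁻¹ = h ^ Q - h) :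
    u = 0 ∧ v = 0 := by
  obtain ⟨n, rfl⟩ := Nat.exists_eq_add_of_le' hQ
  exact eq_zero_of_mul_pow_eq_X_mul n.succ_ne_zero (RatFunc.isCoprime_num_denom h)
    h.denom_ne_zero (RatFunc.mul_denom_pow_eq_X_mul_of_eq_pow_sub_self H)

end

theorem stmt_11_general (q m : ℕ) (hq : ∃ (p k : ℕ), p.Prime ∧ 0 < k ∧ q = p ^ k)
    (hm : 0 < m) (E F : Type*) [Field E] [Field F]
    [Algebra E F]
    (u v : E)
    (h : ∃ h : RatFunc F,
      RatFunc.C (algebraMap E F u) * RatFunc.X +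
        RatFunc.C (algebraMap E F v) * RatFunc.X⁻¹ = h ^ (q ^ m) - h) :
    u = 0 ∧ v = 0 := by
  obtain ⟨p, k, hp, hk, rfl⟩ := hq
  obtain ⟨h, hh⟩ := h
  have hQ : 2 ≤ (p ^ k) ^ m := Nat.one_lt_pow hm.ne' (Nat.one_lt_pow hk.ne' hp.one_lt)
  simpa using RatFunc.eq_zero_of_C_mul_X_add_C_mul_X_inv_eq_pow_sub_self hQ hh

/-- If g(x) = u·x + v·x⁻¹ ∈ F_{q^m}(x) with u, v ∈ F_q satisfies
g = h^{q^m} − h for some rational function h ∈ F_{q^m}(x), then u = v = 0. -/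
theorem stmt_11 (q m : ℕ) (hq : ∃ (p k : ℕ), p.Prime ∧ 0 < k ∧ q = p ^ k)
    (hm : 0 < m) (E F : Type*) [Field E] [Fintype E] [Field F] [Fintype F]
    [Algebra E F] (hE : Fintype.card E = q) (hF : Fintype.card F = q ^ m)
    (u v : E)
    (h : ∃ h : RatFunc F,
      RatFunc.C (algebraMap E F u) * RatFunc.X +
        RatFunc.C (algebraMap E F v) * RatFunc.X⁻¹ = h ^ (q ^ m) - h) :
    u = 0 ∧ v = 0 :=
  stmt_11_general q m hq hm E F u v h
end
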